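/- Let $\varepsilon\in(0,1)$ and let $p\in[0,1]^{\binom{[n]}{2}}$ be a sub-probability vector such that $\sum_{\{a,b\}}p_{ab}-\sum_{\{a,c\}}\mathsf{HopD}[p](a,c)\ge\varepsilon$. Then $\sum_{\{a,b\}\in\binom{[n]}{2}}p_{ab}^4\ge 2\varepsilon^4/n^{9/2}$. -/

import Mathlib

open Finset

/-- `deg_p(a) = (1/2) ∑_b p_{ab}` (with `p` a symmetric matrix, zero diagonal). -/
noncomputable def degp (n : ℕ) (p : Fin n → Fin n → ℝ) (a : Fin n) : ℝ :=
  (∑ b, p a b) / 2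

/-- `Walk[p]({a,c},b)`; division by zero is zero, matching `0/0 = 0`. -/
noncomputable def walkFn (n : ℕ) (p : Fin n → Fin n → ℝ) (a c b : Fin n) : ℝ :=
  p a b * p b c / (2 * degp n p b)

/-- `Hop[p](a,c) = ∑_{b ∉ {a,c}} Walk[p]({a,c},b)`. -/
noncomputable def hopFn (n : ℕ) (p : Fin n → Fin n → ℝ) (a c : Fin n) : ℝ :=
  ∑ b ∈ Finset.univ.filter (fun b => b ≠ a ∧ b ≠ c), walkFn n p a c b

/-- `max_{b ∉ {a,c}} Walk[p]({a,c},b)`. -/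
noncomputable def maxWalkFn (n : ℕ) (p : Fin n → Fin n → ℝ) (a c : Fin n) : ℝ :=
  sSup ((fun b => walkFn n p a c b) '' {b : Fin n | b ≠ a ∧ b ≠ c})

/-- `HopD[p](a,c)`. -/
noncomputable def hopDFn (n : ℕ) (p : Fin n → Fin n → ℝ) (a c : Fin n) : ℝ :=
  hopFn n p a c - maxWalkFn n p a c

/-!
Write `D_b = ∑_a p_ab = 2 deg_p(b)` and charge the maximal walk of each ordered pair `(a, c)` to
a middle vertex `β(a, c)` attaining it. Summed over ordered pairs, `Hop` counts every walk
`a → b → c` with `a ≠ c`, i.e. `D_b` minus the diagonal walks `R_b = ∑_a p_ab² / D_b`; hence the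
hypothesis says `∑_b (R_b + σ_b) ≥ 2ε`, where `σ_b` is the total of the `x_b` maximal walks
charged to `b`.

At one vertex, `R_b ≤ max_a p_ab`, while the power-mean inequality and `σ_b ≤ D_b` give
`σ_b⁸ ≤ x_b³ ∑_{a ≠ c} p_ab⁴ p_cb⁴`; Hölder with weights `1` and `√x_b` turns these into
`(R_b + σ_b)⁴ ≤ (1 + √x_b)³ √2 ∑_a p_ab⁴`. Hölder once more over `b`, with `∑_b x_b = n(n - 1)`
and hence `∑_b (1 + √x_b) ≤ n √(2n)`, gives `(2ε)⁴ ≤ 4 n^{9/2} ∑_{a,b} p_ab⁴`.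
-/

theorem pow_sum_le_pow_sum_mul_sum_pow_div {ι : Type*} (s : Finset ι) {w t : ι → ℝ}
    (hw : ∀ i ∈ s, 0 ≤ w i) (ht : ∀ i ∈ s, 0 ≤ t i) (hwt : ∀ i ∈ s, w i = 0 → t i = 0)
    (k : ℕ) :
    (∑ i ∈ s, t i) ^ (k + 1) ≤ (∑ i ∈ s, w i) ^ k * ∑ i ∈ s, t i ^ (k + 1) / w i ^ k := by
  set W := ∑ i ∈ s, w i
  rcases (sum_nonneg hw).eq_or_lt with hW | hW
  · have ht0 : ∀ i ∈ s, t i = 0 := fun i hi ↦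
      hwt i hi ((sum_eq_zero_iff_of_nonneg hw).1 hW.symm i hi)
    rw [sum_eq_zero ht0, sum_eq_zero fun i hi ↦ by simp [ht0 i hi]]
    simp
  -- Jensen for `x ↦ x ^ (k + 1)` with weights `w i / W` at the points `t i / w i`.
  have hmean := Real.pow_arith_mean_le_arith_mean_pow s (fun i ↦ w i / W) (fun i ↦ t i / w i)
    (fun i hi ↦ div_nonneg (hw i hi) hW.le) (by rw [← sum_div, div_self hW.ne'])
    (fun i hi ↦ div_nonneg (ht i hi) (hw i hi)) (k + 1)
  have hpoint : ∀ i ∈ s, w i / W * (t i / w i) = t i / W := by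
    intro i hi
    rcases eq_or_ne (w i) 0 with h | h
    · simp [h, hwt i hi h]
    · field_simp
  have hpow : ∀ i ∈ s, w i / W * (t i / w i) ^ (k + 1) = t i ^ (k + 1) / w i ^ k / W := by
    intro i hi
    rcases eq_or_ne (w i) 0 with h | h
    · simp [h, hwt i hi h]
    · rw [div_pow, pow_succ (w i)]
      field_simp
  rw [sum_congr rfl hpoint, sum_congr rfl hpow, ← sum_div, ← sum_div, div_pow,
    div_le_div_iff₀ (by positivity) hW, pow_succ W k, ← mul_assoc] at hmean
  refine le_of_mul_le_mul_right ?_ hW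
  linarith

theorem add_le_sqrt_two_mul_of_sq_add_sq_le {u v c : ℝ} (hu : 0 ≤ u) (hv : 0 ≤ v) (hc : 0 ≤ c)
    (h : u ^ 2 + v ^ 2 ≤ c ^ 2) : u + v ≤ √2 * c := by
  rw [← pow_le_pow_iff_left₀ (by positivity) (by positivity) two_ne_zero, mul_pow,
    Real.sq_sqrt zero_le_two]
  nlinarith [sq_nonneg (u - v)]

theorem sum_sqrt_le_sqrt_card_mul_sum {ι : Type*} (s : Finset ι) {x : ι → ℝ}
    (hx : ∀ i ∈ s, 0 ≤ x i) : ∑ i ∈ s, √(x i) ≤ √(#s * ∑ i ∈ s, x i) := by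
  apply Real.le_sqrt_of_sq_le
  calc (∑ i ∈ s, √(x i)) ^ 2 ≤ #s * ∑ i ∈ s, √(x i) ^ 2 := sq_sum_le_card_mul_sum_sq
    _ = #s * ∑ i ∈ s, x i := by rw [sum_congr rfl fun i hi ↦ Real.sq_sqrt (hx i hi)]

theorem one_add_sqrt_sub_one_le_sqrt_two_mul {N : ℝ} (hN : 1 ≤ N) :
    1 + √(N - 1) ≤ √(2 * N) := by
  apply Real.le_sqrt_of_sq_le
  have h := Real.sq_sqrt (sub_nonneg.2 hN)
  nlinarith [sq_nonneg (√(N - 1) - 1)]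

theorem sum_one_add_sqrt_le {ι : Type*} [Fintype ι] {x : ι → ℝ} (hx : ∀ i, 0 ≤ x i)
    (hsum : ∑ i, x i ≤ Fintype.card ι * (Fintype.card ι - 1)) :
    ∑ i, (1 + √(x i)) ≤ Fintype.card ι * √(2 * Fintype.card ι) := by
  set N : ℝ := (Fintype.card ι : ℝ)
  rcases isEmpty_or_nonempty ι with hι | hι
  · simp [N]
  have hN : 1 ≤ N := by simp [N, Nat.one_le_iff_ne_zero, Fintype.card_ne_zero]
  have hroot : ∑ i, √(x i) ≤ N * √(N - 1) := by
    calc ∑ i, √(x i) ≤ √(N * ∑ i, x i) := sum_sqrt_le_sqrt_card_mul_sum univ fun i _ ↦ hx i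
      _ ≤ √(N ^ 2 * (N - 1)) := Real.sqrt_le_sqrt (by nlinarith)
      _ = N * √(N - 1) := by rw [Real.sqrt_mul (sq_nonneg N), Real.sqrt_sq (by linarith)]
  calc ∑ i, (1 + √(x i)) = N * 1 + ∑ i, √(x i) := by simp [sum_add_distrib, N]
    _ ≤ N * (1 + √(N - 1)) := by linarith
    _ ≤ N * √(2 * N) := by gcongr; exact one_add_sqrt_sub_one_le_sqrt_two_mul hN

theorem pow_four_sum_le_of_pow_four_le {ι : Type*} [Fintype ι] {T G x : ι → ℝ}
    (hT : ∀ i, 0 ≤ T i) (hx : ∀ i, 0 ≤ x i)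
    (hsum : ∑ i, x i ≤ Fintype.card ι * (Fintype.card ι - 1))
    (hTG : ∀ i, T i ^ 4 ≤ (1 + √(x i)) ^ 3 * G i) :
    (∑ i, T i) ^ 4 ≤ (Fintype.card ι * √(2 * Fintype.card ι)) ^ 3 * ∑ i, G i := by
  have hw : ∀ i, 0 < 1 + √(x i) := fun i ↦ by positivity
  have hG : ∀ i, 0 ≤ G i := fun i ↦
    nonneg_of_mul_nonneg_right ((pow_nonneg (hT i) 4).trans (hTG i)) (pow_pos (hw i) 3)
  calc (∑ i, T i) ^ 4 ≤ (∑ i, (1 + √(x i))) ^ 3 * ∑ i, T i ^ 4 / (1 + √(x i)) ^ 3 :=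
        pow_sum_le_pow_sum_mul_sum_pow_div univ (fun i _ ↦ (hw i).le) (fun i _ ↦ hT i)
          (fun i _ h ↦ absurd h (hw i).ne') 3
    _ ≤ (∑ i, (1 + √(x i))) ^ 3 * ∑ i, G i := by
        gcongr with i
        exact div_le_of_le_mul₀ (by positivity) (hG i) ((hTG i).trans_eq (mul_comm _ _))
    _ ≤ (Fintype.card ι * √(2 * Fintype.card ι)) ^ 3 * ∑ i, G i :=
        mul_le_mul_of_nonneg_right
          (pow_le_pow_left₀ (sum_nonneg fun i _ ↦ (hw i).le) (sum_one_add_sqrt_le hx hsum) 3)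
          (sum_nonneg fun i _ ↦ hG i)

theorem mul_sqrt_two_mul_pow_three_mul_sqrt_two {N : ℝ} (hN : 0 ≤ N) :
    (N * √(2 * N)) ^ 3 * √2 = 4 * N ^ ((9 : ℝ) / 2) := by
  rw [show (9 : ℝ) / 2 = (4 : ℕ) + 1 / 2 by norm_num, Real.rpow_add' hN (by norm_num),
    Real.rpow_natCast, ← Real.sqrt_eq_rpow, Real.sqrt_mul zero_le_two]
  calc (N * (√2 * √N)) ^ 3 * √2 = N ^ 3 * (√2 ^ 2) ^ 2 * √N ^ 2 * √N := by ring
    _ = 4 * (N ^ 4 * √N) := by rw [Real.sq_sqrt zero_le_two, Real.sq_sqrt hN]; ring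

theorem sum_offDiag_mul_eq {ι R : Type*} [DecidableEq ι] [CommRing R] (s : Finset ι)
    (f : ι → R) :
    ∑ z ∈ s.offDiag, f z.1 * f z.2 = (∑ i ∈ s, f i) ^ 2 - ∑ i ∈ s, f i ^ 2 := by
  rw [eq_sub_iff_add_eq, sq, sum_mul_sum, ← sum_product', ← diag_union_offDiag,
    sum_union (disjoint_diag_offDiag s), sum_diag, add_comm]
  simp only [sq]

theorem sum_sum_filter_ne_eq_sum_offDiag {ι M : Type*} [Fintype ι] [DecidableEq ι]
    [AddCommMonoid M] (f : ι → ι → M) :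
    ∑ a, ∑ c ∈ univ.filter (· ≠ a), f a c = ∑ z ∈ univ.offDiag, f z.1 z.2 := by
  rw [show univ.offDiag = (univ ×ˢ univ).filter (fun z : ι × ι ↦ z.1 ≠ z.2) by ext; simp,
    sum_filter, sum_product]
  refine sum_congr rfl fun a _ ↦ ?_
  rw [sum_filter]
  exact sum_congr rfl fun c _ ↦ if_congr ne_comm rfl rfl

theorem sum_card_filter_offDiag_eq {ι κ : Type*} [Fintype ι] [DecidableEq ι] [Fintype κ]
    [DecidableEq κ] (β : ι × ι → κ) :
    ∑ b, (#(univ.offDiag.filter (β · = b)) : ℝ) = Fintype.card ι * (Fintype.card ι - 1) := by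
  rw [← Nat.cast_sum, ← card_eq_sum_card_fiberwise fun z _ ↦ mem_univ (β z), offDiag_card,
    card_univ, Nat.cast_sub (Nat.le_mul_self _)]
  push_cast
  ring

theorem sum_sq_div_sum_le {ι : Type*} (s : Finset ι) {q : ι → ℝ} {m : ℝ}
    (hq : ∀ i ∈ s, 0 ≤ q i) (hm : ∀ i ∈ s, q i ≤ m) (hm0 : 0 ≤ m) :
    (∑ i ∈ s, q i ^ 2) / ∑ i ∈ s, q i ≤ m := by
  refine div_le_of_le_mul₀ (sum_nonneg hq) hm0 ?_
  rw [mul_sum]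
  exact sum_le_sum fun i hi ↦ by rw [sq]; exact mul_le_mul_of_nonneg_right (hm i hi) (hq i hi)

section Vertex

variable {ι : Type*} [Fintype ι] {q : ι → ℝ}

theorem pow_sum_sq_div_sum_le_sum_pow [Nonempty ι] (hq : ∀ i, 0 ≤ q i) (k : ℕ) :
    ((∑ i, q i ^ 2) / ∑ i, q i) ^ k ≤ ∑ i, q i ^ k := by
  obtain ⟨a, ha⟩ := Finite.exists_max q
  calc ((∑ i, q i ^ 2) / ∑ i, q i) ^ k ≤ q a ^ k := by
        gcongr
        · exact div_nonneg (sum_nonneg fun i _ ↦ sq_nonneg _) (sum_nonneg fun i _ ↦ hq i)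
        · exact sum_sq_div_sum_le univ (fun i _ ↦ hq i) (fun i _ ↦ ha i) (hq a)
    _ ≤ ∑ i, q i ^ k := single_le_sum (fun i _ ↦ pow_nonneg (hq i) k) (mem_univ a)

theorem pow_eight_sum_mul_div_sum_le [DecidableEq ι] (hq : ∀ i, 0 ≤ q i) {P : Finset (ι × ι)}
    (hP : P ⊆ univ.offDiag) :
    ((∑ z ∈ P, q z.1 * q z.2) / ∑ i, q i) ^ 8
      ≤ #P ^ 3 * ((∑ i, q i ^ 4) ^ 2 - ∑ i, q i ^ 8) := by
  set S := ∑ z ∈ P, q z.1 * q z.2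
  set D := ∑ i, q i
  have hS : 0 ≤ S := sum_nonneg fun z _ ↦ mul_nonneg (hq _) (hq _)
  have hSD : S ≤ D ^ 2 := calc
    S ≤ ∑ z ∈ univ.offDiag, q z.1 * q z.2 :=
      sum_le_sum_of_subset_of_nonneg hP fun z _ _ ↦ mul_nonneg (hq _) (hq _)
    _ = D ^ 2 - ∑ i, q i ^ 2 := sum_offDiag_mul_eq univ q
    _ ≤ D ^ 2 := sub_le_self _ (sum_nonneg fun i _ ↦ sq_nonneg _)
  have hS4 : S ^ 4 ≤ #P ^ 3 * ((∑ i, q i ^ 4) ^ 2 - ∑ i, q i ^ 8) := calc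
    S ^ 4 ≤ #P ^ 3 * ∑ z ∈ P, (q z.1 * q z.2) ^ 4 :=
      pow_sum_le_card_mul_sum_pow (fun z _ ↦ mul_nonneg (hq _) (hq _)) 3
    _ ≤ #P ^ 3 * ∑ z ∈ univ.offDiag, q z.1 ^ 4 * q z.2 ^ 4 := by
      simp_rw [mul_pow]
      gcongr
    _ = #P ^ 3 * ((∑ i, q i ^ 4) ^ 2 - ∑ i, q i ^ 8) := by
      rw [sum_offDiag_mul_eq univ (q · ^ 4)]
      simp_rw [← pow_mul]
  have hSD8 : (S / D) ^ 8 ≤ S ^ 4 := by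
    rcases eq_or_ne D 0 with hD | hD
    · simp [hD, hS]
    rw [div_pow, div_le_iff₀ (by positivity)]
    calc S ^ 8 = S ^ 4 * S ^ 4 := by ring
      _ ≤ S ^ 4 * (D ^ 2) ^ 4 := by gcongr
      _ = S ^ 4 * D ^ 8 := by ring
  exact hSD8.trans hS4

theorem pow_four_sum_sq_div_sum_add_sum_mul_div_sum_le [DecidableEq ι] [Nonempty ι]
    (hq : ∀ i, 0 ≤ q i) {P : Finset (ι × ι)} (hP : P ⊆ univ.offDiag) :
    ((∑ i, q i ^ 2) / ∑ i, q i + (∑ z ∈ P, q z.1 * q z.2) / ∑ i, q i) ^ 4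
      ≤ (1 + √(#P : ℝ)) ^ 3 * (√2 * ∑ i, q i ^ 4) := by
  set R := (∑ i, q i ^ 2) / ∑ i, q i
  set σ := (∑ z ∈ P, q z.1 * q z.2) / ∑ i, q i
  set s := √(#P : ℝ)
  have hD : 0 ≤ ∑ i, q i := sum_nonneg fun i _ ↦ hq i
  have hR : 0 ≤ R := div_nonneg (sum_nonneg fun i _ ↦ sq_nonneg _) hD
  have hσ : 0 ≤ σ := div_nonneg (sum_nonneg fun z _ ↦ mul_nonneg (hq _) (hq _)) hD
  have hsσ : s = 0 → σ = 0 := fun h ↦ by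
    rw [Real.sqrt_eq_zero (Nat.cast_nonneg _), Nat.cast_eq_zero, card_eq_zero] at h
    simp [σ, h]
  have hsplit : (R + σ) ^ 4 ≤ (1 + s) ^ 3 * (R ^ 4 + σ ^ 4 / s ^ 3) := by
    have := pow_sum_le_pow_sum_mul_sum_pow_div univ (w := ![1, s]) (t := ![R, σ])
      (by simp [Fin.forall_fin_two, s]) (by simp [Fin.forall_fin_two, hR, hσ])
      (by simpa [Fin.forall_fin_two] using hsσ) 3
    simpa [Fin.sum_univ_two] using this
  have hu : (R ^ 4) ^ 2 ≤ ∑ i, q i ^ 8 := by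
    rw [← pow_mul]; exact pow_sum_sq_div_sum_le_sum_pow hq 8
  have hv : (σ ^ 4 / s ^ 3) ^ 2 ≤ (∑ i, q i ^ 4) ^ 2 - ∑ i, q i ^ 8 := by
    have hs6 : (s ^ 3) ^ 2 = (#P : ℝ) ^ 3 := by
      rw [← pow_mul, mul_comm, pow_mul, Real.sq_sqrt (Nat.cast_nonneg _)]
    have h8 : ∑ i, q i ^ 8 ≤ (∑ i, q i ^ 4) ^ 2 := by
      simpa only [← pow_mul] using sum_sq_le_sq_sum_of_nonneg fun i _ ↦ pow_nonneg (hq i) 4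
    rw [div_pow, hs6, ← pow_mul]
    exact div_le_of_le_mul₀ (by positivity) (sub_nonneg.2 h8)
      ((pow_eight_sum_mul_div_sum_le hq hP).trans_eq (mul_comm _ _))
  calc (R + σ) ^ 4 ≤ (1 + s) ^ 3 * (R ^ 4 + σ ^ 4 / s ^ 3) := hsplit
    _ ≤ (1 + s) ^ 3 * (√2 * ∑ i, q i ^ 4) := by
      gcongr
      exact add_le_sqrt_two_mul_of_sq_add_sq_le (by positivity) (by positivity)
        (sum_nonneg fun i _ ↦ by positivity) (by linarith)

end Vertex

section Walks

variable {n : ℕ} {p : Fin n → Fin n → ℝ}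

theorem walkFn_eq (hsymm : ∀ a b, p a b = p b a) (a c b : Fin n) :
    walkFn n p a c b = p a b * p c b / ∑ d, p d b := by
  simp only [walkFn, degp, hsymm b]
  ring

theorem hopFn_eq_sum_walkFn (hdiag : ∀ a, p a a = 0) (a c : Fin n) :
    hopFn n p a c = ∑ b, walkFn n p a c b := by
  refine sum_filter_of_ne fun b _ hb ↦ ⟨?_, ?_⟩ <;> rintro rfl <;> simp [walkFn, hdiag] at hb

theorem exists_maxWalkFn_eq_walkFn (hdiag : ∀ a, p a a = 0) (a c : Fin n) :
    ∃ b, maxWalkFn n p a c = walkFn n p a c b := by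
  rcases Set.eq_empty_or_nonempty {b : Fin n | b ≠ a ∧ b ≠ c} with h | h
  -- No middle vertex (`n ≤ 2`): `sSup ∅ = 0`, which is the degenerate walk through `a` itself.
  · exact ⟨a, by simp [maxWalkFn, walkFn, h, hdiag]⟩
  · obtain ⟨b, -, hb⟩ := (h.image (walkFn n p a c)).csSup_mem (Set.toFinite _)
    exact ⟨b, hb.symm⟩

theorem sum_offDiag_hopFn (hsymm : ∀ a b, p a b = p b a) (hdiag : ∀ a, p a a = 0) :
    ∑ z ∈ univ.offDiag, hopFn n p z.1 z.2
      = ∑ b, (∑ a, p a b - (∑ a, p a b ^ 2) / ∑ a, p a b) := by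
  simp_rw [hopFn_eq_sum_walkFn hdiag, walkFn_eq hsymm]
  rw [sum_comm]
  refine sum_congr rfl fun b _ ↦ ?_
  rw [← sum_div, sum_offDiag_mul_eq univ (p · b), sub_div, sq (∑ a, p a b), mul_self_div_self]

theorem sum_offDiag_maxWalkFn (hsymm : ∀ a b, p a b = p b a) {β : Fin n × Fin n → Fin n}
    (hβ : ∀ z, maxWalkFn n p z.1 z.2 = walkFn n p z.1 z.2 (β z)) :
    ∑ z ∈ univ.offDiag, maxWalkFn n p z.1 z.2
      = ∑ b, (∑ z ∈ univ.offDiag.filter (β · = b), p z.1 b * p z.2 b) / ∑ a, p a b := by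
  rw [← sum_fiberwise univ.offDiag β]
  refine sum_congr rfl fun b _ ↦ ?_
  rw [sum_div]
  refine sum_congr rfl fun z hz ↦ ?_
  rw [hβ, (mem_filter.1 hz).2, walkFn_eq hsymm]

end Walks

theorem stmt12_general (n : ℕ) (ε : ℝ) (hε0 : 0 < ε)
    (p : Fin n → Fin n → ℝ)
    (hsymm : ∀ a b, p a b = p b a) (hdiag : ∀ a, p a a = 0)
    (hnn : ∀ a b, 0 ≤ p a b)
    (hcon : ε ≤ (∑ a, ∑ b, p a b) / 2
        - (∑ a, ∑ c ∈ Finset.univ.filter (· ≠ a), hopDFn n p a c) / 2) :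
    2 * ε ^ 4 / (n : ℝ) ^ ((9 : ℝ) / 2) ≤ (∑ a, ∑ b, (p a b) ^ 4) / 2 := by
  choose β hβ using fun z : Fin n × Fin n ↦ exists_maxWalkFn_eq_walkFn hdiag z.1 z.2
  set P : Fin n → Finset (Fin n × Fin n) := fun b ↦ univ.offDiag.filter (β · = b)
  set T : Fin n → ℝ := fun b ↦
    (∑ a, p a b ^ 2) / ∑ a, p a b + (∑ z ∈ P b, p z.1 b * p z.2 b) / ∑ a, p a b
  have hmass : 2 * ε ≤ ∑ b, T b := by
    rw [sum_sum_filter_ne_eq_sum_offDiag (hopDFn n p)] at hcon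
    simp only [hopDFn, sum_sub_distrib] at hcon
    rw [sum_offDiag_hopFn hsymm hdiag, sum_offDiag_maxWalkFn hsymm hβ, sum_comm] at hcon
    simp only [T, sum_add_distrib, sum_sub_distrib] at hcon ⊢
    linarith
  have hvertex (b : Fin n) : T b ^ 4 ≤ (1 + √(#(P b) : ℝ)) ^ 3 * (√2 * ∑ a, p a b ^ 4) :=
    have : Nonempty (Fin n) := ⟨b⟩
    pow_four_sum_sq_div_sum_add_sum_mul_div_sum_le (fun a ↦ hnn a b) (filter_subset _ _)
  have hT (b : Fin n) : 0 ≤ T b := by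
    have hD : 0 ≤ ∑ a, p a b := sum_nonneg fun a _ ↦ hnn a b
    have hS : 0 ≤ ∑ z ∈ P b, p z.1 b * p z.2 b :=
      sum_nonneg fun z _ ↦ mul_nonneg (hnn _ _) (hnn _ _)
    positivity
  have hglobal := pow_four_sum_le_of_pow_four_le hT (fun b ↦ Nat.cast_nonneg _)
    (sum_card_filter_offDiag_eq β).le hvertex
  rw [Fintype.card_fin, ← mul_sum, ← mul_assoc,
    mul_sqrt_two_mul_pow_three_mul_sqrt_two n.cast_nonneg, sum_comm] at hglobal
  have hε4 : (2 * ε) ^ 4 ≤ (∑ b, T b) ^ 4 := pow_le_pow_left₀ (by positivity) hmass 4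
  refine div_le_of_le_mul₀ (by positivity) (by positivity) ?_
  linarith

theorem stmt12 (n : ℕ) (ε : ℝ) (hε0 : 0 < ε) (hε1 : ε < 1)
    (p : Fin n → Fin n → ℝ)
    (hsymm : ∀ a b, p a b = p b a) (hdiag : ∀ a, p a a = 0)
    (hnn : ∀ a b, 0 ≤ p a b) (hle : ∀ a b, p a b ≤ 1)
    (hsub : (∑ a, ∑ b, p a b) / 2 ≤ 1)
    (hcon : ε ≤ (∑ a, ∑ b, p a b) / 2
        - (∑ a, ∑ c ∈ Finset.univ.filter (· ≠ a), hopDFn n p a c) / 2) :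
    2 * ε ^ 4 / (n : ℝ) ^ ((9 : ℝ) / 2) ≤ (∑ a, ∑ b, (p a b) ^ 4) / 2 :=
  stmt12_general n ε hε0 p hsymm hdiag hnn hcon
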